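/- Let C = e₁C₁ ⊕ e₂C₂ ⊕ e₃C₃ ⊕ e₄C₄ be a linear code of length n over R. Then the minimum Lee distance of C satisfies d_L(C) = min{ d_H(C₁), 4·d_H(C₂), 2·d_H(C₃), 2·d_H(C₄) }. -/

import Mathlib

/-!
The idempotents `eᵢ` split `R` as `F⁴`: `eᵢ * r = φᵢ(r) eᵢ` and `∑ eᵢ = 1`, so a word `c` is
determined by its components `xᵢ = φᵢ ∘ c` (indexed from 0, as in `phiI`), and its Gray image is
`(x₁ - x₂ - x₃ + x₀, x₁ - x₂, x₁ - x₃, x₁)`. Subadditivity of the Hamming weight gives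
`wt x₀ ≤ wt_L c`; when `x₀ = 0`, each of `x₂` and `x₃` is a difference of two Gray coordinates in
two disjoint ways, so `2 wt x₂, 2 wt x₃ ≤ wt_L c`; and when `x₀ = x₂ = x₃ = 0`, `wt_L c = 4 wt x₁`.
Conversely `x • eᵢ` with `x ∈ Cᵢ` has Lee weight `1, 4, 2, 2` times `wt x`.
-/

set_option synthInstance.maxHeartbeats 1000000
set_option maxHeartbeats 1000000

noncomputable section

open MvPolynomial

/-- Generators u^2-u, v^2-v of the defining ideal. -/
def genSet (F : Type) [Field F] : Set (MvPolynomial (Fin 2) F) :=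
  {X 0 ^ 2 - X 0, X 1 ^ 2 - X 1}

/-- The ring R = F_q[u,v]/(u^2-u, v^2-v). -/
abbrev Rq (F : Type) [Field F] := MvPolynomial (Fin 2) F ⧸ Ideal.span (genSet F)

/-- The image of u in R. -/
def uu (F : Type) [Field F] : Rq F := Ideal.Quotient.mk _ (X 0)

/-- The image of v in R. -/
def vv (F : Type) [Field F] : Rq F := Ideal.Quotient.mk _ (X 1)

/-- The idempotents e1 = 1-u-v+uv, e2 = uv, e3 = u-uv, e4 = v-uv. -/
def ee (F : Type) [Field F] : Fin 4 → Rq F :=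
  ![1 - uu F - vv F + uu F * vv F, uu F * vv F, uu F - uu F * vv F, vv F - uu F * vv F]

/-- Evaluation of R at a point (x,y) with x^2 = x, y^2 = y. -/
def phi4 (F : Type) [Field F] (p : Fin 2 → F) (hp : ∀ i, p i ^ 2 = p i) : Rq F →+* F :=
  Ideal.Quotient.lift _ (aeval p).toRingHom (by
    intro a ha
    have h : Ideal.span (genSet F) ≤ RingHom.ker (aeval p).toRingHom := by
      rw [Ideal.span_le]
      rintro g (rfl | rfl) <;> simp [RingHom.mem_ker, hp 0, hp 1]
    exact h ha)

/-- The projections φ₁, φ₂, φ₃, φ₄ : R → F_q sending a+bu+cv+duv to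
a, a+b+c+d, a+b, a+c respectively (i.e. evaluation at (0,0),(1,1),(1,0),(0,1)). -/
def phiI (F : Type) [Field F] : Fin 4 → (Rq F →+* F) :=
  ![phi4 F ![0,0] (by intro i; fin_cases i <;> norm_num),
    phi4 F ![1,1] (by intro i; fin_cases i <;> norm_num),
    phi4 F ![1,0] (by intro i; fin_cases i <;> norm_num),
    phi4 F ![0,1] (by intro i; fin_cases i <;> norm_num)]

/-- Hamming weight: the number of nonzero coordinates. -/
def hNorm {ι α : Type} [Fintype ι] [Zero α] (x : ι → α) : ℕ := Nat.card {i // x i ≠ 0}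

/-- The Gray map R → F_q⁴, a+bu+cv+duv ↦ (d, c+d, b+d, a+b+c+d), written in terms of
the projections φᵢ. -/
def gray1 (F : Type) [Field F] (r : Rq F) : Fin 4 → F :=
  ![phiI F 1 r - phiI F 2 r - phiI F 3 r + phiI F 0 r,
    phiI F 1 r - phiI F 2 r, phiI F 1 r - phiI F 3 r, phiI F 1 r]

/-- The Lee weight of a word over R: the Hamming weight of its Gray image. -/
def leeWt (F : Type) [Field F] {n : ℕ} (r : Fin n → Rq F) : ℕ :=
  ∑ j, hNorm (gray1 F (r j))

section Ring

variable (F : Type) [Field F]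

lemma phi4_mk (p : Fin 2 → F) (hp : ∀ i, p i ^ 2 = p i) (q : MvPolynomial (Fin 2) F) :
    phi4 F p hp (Ideal.Quotient.mk _ q) = aeval p q :=
  Ideal.Quotient.lift_mk _ _ _

lemma isIdempotentElem_uu : IsIdempotentElem (uu F) :=
  Ideal.Quotient.eq.mpr (Ideal.subset_span (by simp [genSet, sq]))

lemma isIdempotentElem_vv : IsIdempotentElem (vv F) :=
  Ideal.Quotient.eq.mpr (Ideal.subset_span (by simp [genSet, sq]))

lemma phiI_uu (i : Fin 4) : phiI F i (uu F) = ![0, 1, 1, 0] i := by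
  fin_cases i <;> simp [phiI, uu, phi4_mk]

lemma phiI_vv (i : Fin 4) : phiI F i (vv F) = ![0, 1, 0, 1] i := by
  fin_cases i <;> simp [phiI, vv, phi4_mk]

lemma phiI_algebraMap (i : Fin 4) (a : F) : phiI F i (algebraMap F (Rq F) a) = a := by
  have h : algebraMap F (Rq F) a = Ideal.Quotient.mk _ (C a) := rfl
  fin_cases i <;> simp [phiI, h, phi4_mk]

lemma phiI_smul (i : Fin 4) (a : F) (r : Rq F) : phiI F i (a • r) = a * phiI F i r := by
  rw [Algebra.smul_def a r, map_mul, phiI_algebraMap]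

lemma phiI_ee (i j : Fin 4) : phiI F j (ee F i) = if i = j then 1 else 0 := by
  fin_cases i <;> fin_cases j <;> simp [ee, phiI_uu, phiI_vv]

lemma sum_ee : ∑ i, ee F i = 1 := by
  simp only [ee, Fin.sum_univ_four, Matrix.cons_val_zero, Matrix.cons_val_one, Matrix.cons_val]
  ring

lemma ee_mul_uu (i : Fin 4) :
    ee F i * uu F = algebraMap F (Rq F) (phiI F i (uu F)) * ee F i := by
  have hu : uu F * uu F = uu F := isIdempotentElem_uu F
  fin_cases i <;>
    simp only [ee, phiI_uu, Fin.zero_eta, Fin.mk_one, Fin.reduceFinMk, Matrix.cons_val_zero,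
      Matrix.cons_val_one, Matrix.cons_val, map_zero, map_one, zero_mul, one_mul]
  · linear_combination (vv F - 1) * hu
  · linear_combination vv F * hu
  · linear_combination (1 - vv F) * hu
  · linear_combination -vv F * hu

lemma ee_mul_vv (i : Fin 4) :
    ee F i * vv F = algebraMap F (Rq F) (phiI F i (vv F)) * ee F i := by
  have hv : vv F * vv F = vv F := isIdempotentElem_vv F
  fin_cases i <;>
    simp only [ee, phiI_vv, Fin.zero_eta, Fin.mk_one, Fin.reduceFinMk, Matrix.cons_val_zero,
      Matrix.cons_val_one, Matrix.cons_val, map_zero, map_one, zero_mul, one_mul]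
  · linear_combination (uu F - 1) * hv
  · linear_combination uu F * hv
  · linear_combination -uu F * hv
  · linear_combination (1 - uu F) * hv

lemma ee_mul (i : Fin 4) (r : Rq F) :
    ee F i * r = algebraMap F (Rq F) (phiI F i r) * ee F i := by
  obtain ⟨p, rfl⟩ := Ideal.Quotient.mk_surjective r
  induction p using MvPolynomial.induction_on with
  | C a =>
    change ee F i * algebraMap F (Rq F) a = algebraMap F (Rq F) (phiI F i (algebraMap F _ a)) * _
    rw [phiI_algebraMap, mul_comm]
  | add p q hp hq => rw [map_add, map_add, map_add, mul_add, add_mul, hp, hq]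
  | mul_X p k hp =>
    have hX : Ideal.Quotient.mk (Ideal.span (genSet F)) (X k) = ![uu F, vv F] k := by
      fin_cases k <;> rfl
    have hXe : ee F i * ![uu F, vv F] k
        = algebraMap F (Rq F) (phiI F i (![uu F, vv F] k)) * ee F i := by
      fin_cases k
      exacts [ee_mul_uu F i, ee_mul_vv F i]
    rw [map_mul, hX, ← mul_assoc, hp, mul_assoc, hXe, map_mul, map_mul, mul_assoc]

lemma eq_zero_of_forall_phiI_eq_zero {r : Rq F} (h : ∀ i, phiI F i r = 0) : r = 0 :=
  calc r = ∑ i, ee F i * r := by rw [← Finset.sum_mul, sum_ee, one_mul]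
    _ = 0 := by simp [ee_mul, h]

end Ring

section HammingWeight

variable {ι G : Type} [Fintype ι]

lemma hNorm_eq_hammingNorm [Zero G] [DecidableEq G] (x : ι → G) : hNorm x = hammingNorm x := by
  rw [hNorm, Nat.card_eq_fintype_card, Fintype.card_subtype, hammingNorm]

lemma sum_hNorm_comm {κ : Type} [Fintype κ] [Zero G] (x : ι → κ → G) :
    ∑ j, hNorm (x j) = ∑ k, hNorm (fun j => x j k) := by
  classical
  simp only [hNorm_eq_hammingNorm, hammingNorm, Finset.card_filter]
  exact Finset.sum_comm

lemma hNorm_zero [Zero G] : hNorm (0 : ι → G) = 0 := by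
  classical
  rw [hNorm_eq_hammingNorm, hammingNorm_zero]

variable [AddCommGroup G]

lemma hNorm_neg (x : ι → G) : hNorm (-x) = hNorm x := by
  classical
  simp only [hNorm_eq_hammingNorm]
  exact hammingNorm_comp (fun _ => Neg.neg) (fun _ => neg_injective) (fun _ => neg_zero)

lemma hNorm_add_le (x y : ι → G) : hNorm (x + y) ≤ hNorm x + hNorm y := by
  classical
  simpa only [hammingDist_eq_hammingNorm, neg_neg, neg_zero, zero_add, add_zero,
    ← hNorm_eq_hammingNorm] using hammingDist_triangle (-x) 0 y

lemma hNorm_sub_le (x y : ι → G) : hNorm (x - y) ≤ hNorm x + hNorm y := by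
  simpa only [sub_eq_add_neg, hNorm_neg] using hNorm_add_le x (-y)

/-- The Lee weight of a word whose images under `phiI F 0, …, phiI F 3` are `a, b, c, d`. -/
def grayWeight (a b c d : ι → G) : ℕ :=
  hNorm (b - c - d + a) + hNorm (b - c) + hNorm (b - d) + hNorm b

variable (a b c d : ι → G)

lemma hNorm_le_grayWeight : hNorm a ≤ grayWeight a b c d := by
  have h₁ := hNorm_add_le (b - c - d + a - (b - c) - (b - d)) b
  have h₂ := hNorm_sub_le (b - c - d + a - (b - c)) (b - d)
  have h₃ := hNorm_sub_le (b - c - d + a) (b - c)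
  rw [show b - c - d + a - (b - c) - (b - d) + b = a by abel] at h₁
  rw [grayWeight]
  omega

lemma two_mul_hNorm_le_grayWeight_of_eq_zero_left (ha : a = 0) :
    2 * hNorm c ≤ grayWeight a b c d := by
  have h₁ := hNorm_sub_le b (b - c)
  have h₂ := hNorm_sub_le (b - d) (b - c - d)
  rw [sub_sub_cancel] at h₁
  rw [show b - d - (b - c - d) = c by abel] at h₂
  simp only [grayWeight, ha, add_zero]
  omega

lemma two_mul_hNorm_le_grayWeight_of_eq_zero_right (ha : a = 0) :
    2 * hNorm d ≤ grayWeight a b c d := by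
  have h₁ := hNorm_sub_le b (b - d)
  have h₂ := hNorm_sub_le (b - c) (b - c - d)
  rw [sub_sub_cancel] at h₁
  rw [sub_sub_cancel] at h₂
  simp only [grayWeight, ha, add_zero]
  omega

lemma grayWeight_eq_four_mul (ha : a = 0) (hc : c = 0) (hd : d = 0) :
    grayWeight a b c d = 4 * hNorm b := by
  simp only [grayWeight, ha, hc, hd, sub_zero, add_zero]
  ring

end HammingWeight

section LeeWeight

variable (F : Type) [Field F] {n : ℕ}

lemma leeWt_eq_grayWeight (c : Fin n → Rq F) :
    leeWt F c = grayWeight (phiI F 0 ∘ c) (phiI F 1 ∘ c) (phiI F 2 ∘ c) (phiI F 3 ∘ c) := by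
  rw [leeWt, sum_hNorm_comm, Fin.sum_univ_four]
  rfl

lemma exists_mul_hNorm_le_leeWt {c : Fin n → Rq F} (hc : c ≠ 0) :
    ∃ i, phiI F i ∘ c ≠ 0 ∧ ![1, 4, 2, 2] i * hNorm (phiI F i ∘ c) ≤ leeWt F c := by
  rw [leeWt_eq_grayWeight]
  by_cases h₀ : phiI F 0 ∘ c = 0
  swap
  · exact ⟨0, h₀, by simpa using hNorm_le_grayWeight _ _ _ _⟩
  by_cases h₂ : phiI F 2 ∘ c = 0
  swap
  · exact ⟨2, h₂, two_mul_hNorm_le_grayWeight_of_eq_zero_left _ _ _ _ h₀⟩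
  by_cases h₃ : phiI F 3 ∘ c = 0
  swap
  · exact ⟨3, h₃, two_mul_hNorm_le_grayWeight_of_eq_zero_right _ _ _ _ h₀⟩
  have h₁ : phiI F 1 ∘ c ≠ 0 := by
    refine fun h₁ => hc (funext fun j => eq_zero_of_forall_phiI_eq_zero F fun i => ?_)
    fin_cases i
    exacts [congrFun h₀ j, congrFun h₁ j, congrFun h₂ j, congrFun h₃ j]
  exact ⟨1, h₁, (grayWeight_eq_four_mul _ _ _ _ h₀ h₂ h₃).ge⟩

lemma phiI_comp_smul_ee (x : Fin n → F) (i k : Fin 4) :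
    phiI F k ∘ (fun j => x j • ee F i) = (Pi.single i x : Fin 4 → Fin n → F) k := by
  funext j
  by_cases h : k = i
  · subst h
    simp [phiI_smul, phiI_ee]
  · simp [phiI_smul, phiI_ee, h, Ne.symm h]

lemma leeWt_smul_ee (x : Fin n → F) (i : Fin 4) :
    leeWt F (fun j => x j • ee F i) = ![1, 4, 2, 2] i * hNorm x := by
  rw [leeWt_eq_grayWeight]
  simp only [phiI_comp_smul_ee]
  fin_cases i <;>
    simp only [grayWeight, Fin.zero_eta, Fin.mk_one, Fin.reduceFinMk, Pi.single_eq_same, ne_eq,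
      one_ne_zero, zero_ne_one, Fin.reduceEq, not_false_eq_true, Pi.single_eq_of_ne, sub_self,
      sub_zero, zero_sub, zero_add, add_zero, hNorm_neg, hNorm_zero, Matrix.cons_val_zero,
      Matrix.cons_val_one, Matrix.cons_val] <;>
    ring

end LeeWeight

lemma isLeast_min_min_min {α : Type} [LinearOrder α] {S : Set α} {m : Fin 4 → α}
    (hm : ∀ i, m i ∈ S) (hS : ∀ k ∈ S, ∃ i, m i ≤ k) :
    IsLeast S (min (m 0) (min (m 1) (min (m 2) (m 3)))) := by
  have min_mem : ∀ a b, a ∈ S → b ∈ S → min a b ∈ S := fun a b ha hb => by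
    rcases min_choice a b with h | h <;> rw [h] <;> assumption
  refine ⟨min_mem _ _ (hm 0) (min_mem _ _ (hm 1) (min_mem _ _ (hm 2) (hm 3))), fun k hk => ?_⟩
  obtain ⟨i, hi⟩ := hS k hk
  fin_cases i <;> simp only [min_le_iff] <;> tauto

theorem stmt17_general (F : Type) [Field F] (n : ℕ)
    (C : Submodule (Rq F) (Fin n → Rq F))
    (Ci : Fin 4 → Submodule F (Fin n → F))
    (hC : ∀ s : Fin n → Rq F, s ∈ C ↔ ∀ i : Fin 4, (phiI F i) ∘ s ∈ Ci i)
    (d : Fin 4 → ℕ)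
    (hd : ∀ i, IsLeast {k | ∃ c ∈ Ci i, c ≠ 0 ∧ hNorm c = k} (d i)) :
    IsLeast {k | ∃ c ∈ C, c ≠ 0 ∧ leeWt F c = k}
      (min (d 0) (min (4 * d 1) (min (2 * d 2) (2 * d 3)))) := by
  have attained : ∀ i, ![1, 4, 2, 2] i * d i ∈ {k | ∃ c ∈ C, c ≠ 0 ∧ leeWt F c = k} := by
    intro i
    obtain ⟨x, hx, hx0, hxd⟩ := (hd i).1
    refine ⟨fun j => x j • ee F i, (hC _).2 fun k => ?_, fun h => hx0 ?_, ?_⟩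
    · rw [phiI_comp_smul_ee]
      by_cases h : k = i
      · subst h; simpa using hx
      · simp [h]
    · simpa [h] using (phiI_comp_smul_ee F x i i).symm
    · rw [leeWt_smul_ee, hxd]
  have bounded : ∀ k ∈ {k | ∃ c ∈ C, c ≠ 0 ∧ leeWt F c = k}, ∃ i, ![1, 4, 2, 2] i * d i ≤ k := by
    rintro _ ⟨c, hc, hc0, rfl⟩
    obtain ⟨i, hi0, hi⟩ := exists_mul_hNorm_le_leeWt F hc0
    exact ⟨i, (Nat.mul_le_mul_left _ ((hd i).2 ⟨_, (hC c).1 hc i, hi0, rfl⟩)).trans hi⟩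
  simpa using isLeast_min_min_min attained bounded

theorem stmt17 (F : Type) [Field F] [Fintype F] (n : ℕ)
    (C : Submodule (Rq F) (Fin n → Rq F))
    (Ci : Fin 4 → Submodule F (Fin n → F))
    (hC : ∀ s : Fin n → Rq F, s ∈ C ↔ ∀ i : Fin 4, (phiI F i) ∘ s ∈ Ci i)
    (hCi : ∀ i, Ci i ≠ ⊥)
    (d : Fin 4 → ℕ)
    (hd : ∀ i, IsLeast {k | ∃ c ∈ Ci i, c ≠ 0 ∧ hNorm c = k} (d i)) :
    IsLeast {k | ∃ c ∈ C, c ≠ 0 ∧ leeWt F c = k}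
      (min (d 0) (min (4 * d 1) (min (2 * d 2) (2 * d 3)))) :=
  stmt17_general F n C Ci hC d hd
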